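/- arXiv:1612.02036 — 7 statements merged into one kernel-verified Lean document; each statement's English description precedes it below -/
import Mathlib

section
/- Let t̃ ∈ ℝ and H(t) = 2/(3(t − t̃)) for t ≠ t̃. Let P : ℝ → ℝ be three times continuously differentiable, let I be an open interval with t₀ ∈ I, t̃ ∉ I, and let X : I → ℝ be differentiable with H'(t) = −X(t)·P'(X(t)) for all t ∈ I (the Friedmann equation in reduced Planck units). Assume that at t₀: P(X(t₀)) = 0, X(t₀) ≠ 0, X'(t₀) ≠ 0, P'(X(t₀)) > 0, and P'(X(t₀)) + 2X(t₀)·P''(X(t₀)) > 0. Define c_s(t) = √(P'(X(t))/(P'(X(t)) + 2X(t)·P''(X(t)))) for t near t₀, s = c_s'(t₀)/(c_s(t₀)·H(t₀)), Σ(X) = X·P'(X) + 2X²·P''(X) and λ(X) = X²·P''(X) + (2/3)·X³·P'''(X). Then λ(X(t₀))/Σ(X(t₀)) = (1/3)·[(1/(2c_s(t₀)²))·(1 + (2/3)·s)·(1 + c_s(t₀)²) − 1]. -/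
open Topology

/-!
The matter-contraction Hubble rate obeys `Ḣ = -(3/2) H²`, so the Friedmann equation
`Ḣ = -X P'(X)` reads `X P'(X) = (3/2) H²` near `t₀`. Differentiating it gives
`Ẋ (P' + X P'') = -3 H X P'`, which eliminates `Ẋ` from `s = (c_s²)˙ / (2 c_s² H)` once the
derivative of `c_s² = P' / (P' + 2 X P'')` in `X` is computed; what is left is a rational identity
in `X, P', P'', P'''`.
-/

theorem matterHubble_hasDerivAt {H : ℝ → ℝ} {ttil t : ℝ}
    (hH : ∀ t : ℝ, t ≠ ttil → H t = 2 / (3 * (t - ttil))) (ht : t ≠ ttil) :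
    HasDerivAt H (-(3 / 2) * H t ^ 2) t := by
  have hu : t - ttil ≠ 0 := sub_ne_zero.mpr ht
  have hEq : (fun t => 2 / (3 * (t - ttil))) =ᶠ[𝓝 t] H :=
    eventually_ne_nhds ht |>.mono fun r hr => (hH r hr).symm
  have hd : HasDerivAt (fun t => 2 / (3 * (t - ttil))) (-(3 / 2) * H t ^ 2) t := by
    refine ((hasDerivAt_const t (2 : ℝ)).div
      (((hasDerivAt_id t).sub_const ttil).const_mul 3) (by simpa using hu)).congr_deriv ?_
    rw [hH t ht, id]
    field_simp
    ring
  exact hd.congr_of_eventuallyEq hEq.symm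

theorem kinetic_deriv_eq_of_matter_friedmann {f H X : ℝ → ℝ} {f' x₁ t₀ : ℝ}
    (hf : HasDerivAt f f' (X t₀)) (hX : HasDerivAt X x₁ t₀)
    (hH : HasDerivAt H (-(3 / 2) * H t₀ ^ 2) t₀)
    (hkin : (fun t => X t * f (X t)) =ᶠ[𝓝 t₀] fun t => 3 / 2 * H t ^ 2) :
    x₁ * (f (X t₀) + X t₀ * f') = -3 * H t₀ * (X t₀ * f (X t₀)) := by
  have hL : HasDerivAt (fun t => X t * f (X t)) (x₁ * f (X t₀) + X t₀ * (f' * x₁)) t₀ :=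
    hX.mul (hf.comp t₀ hX)
  have hR : HasDerivAt (fun t => 3 / 2 * H t ^ 2)
      (3 / 2 * (2 * H t₀ * (-(3 / 2) * H t₀ ^ 2))) t₀ :=
    (hH.pow 2).const_mul (3 / 2) |>.congr_deriv (by ring)
  linear_combination (hL.congr_of_eventuallyEq hkin.symm).unique hR
    + 3 * H t₀ * hkin.self_of_nhds

noncomputable def soundSpeedSq (P : ℝ → ℝ) (Y : ℝ) : ℝ :=
  deriv P Y / (deriv P Y + 2 * Y * deriv (deriv P) Y)

theorem hasDerivAt_soundSpeedSq {P : ℝ → ℝ} {Y : ℝ}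
    (h₁ : DifferentiableAt ℝ (deriv P) Y) (h₂ : DifferentiableAt ℝ (deriv (deriv P)) Y)
    (hD : deriv P Y + 2 * Y * deriv (deriv P) Y ≠ 0) :
    HasDerivAt (soundSpeedSq P)
      (-2 * (deriv P Y * deriv (deriv P) Y - Y * deriv (deriv P) Y ^ 2
          + Y * deriv P Y * deriv (deriv (deriv P)) Y)
        / (deriv P Y + 2 * Y * deriv (deriv P) Y) ^ 2) Y := by
  have hden : HasDerivAt (fun y => deriv P y + 2 * y * deriv (deriv P) y)
      (deriv (deriv P) Y + (2 * deriv (deriv P) Y + 2 * Y * deriv (deriv (deriv P)) Y)) Y :=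
    (h₁.hasDerivAt.add (((hasDerivAt_id' Y).const_mul 2).mul h₂.hasDerivAt)).congr_deriv
      (by ring)
  refine (h₁.hasDerivAt.div hden hD).congr_deriv ?_
  ring

theorem running_mul_eq_of_eq_sqrt_comp {c q X : ℝ → ℝ} {q' x₁ h s t₀ : ℝ}
    (hc : ∀ t, c t = √(q (X t))) (hq : HasDerivAt q q' (X t₀)) (hX : HasDerivAt X x₁ t₀)
    (hpos : 0 < q (X t₀)) (hh : h ≠ 0) (hs : s = deriv c t₀ / (c t₀ * h)) :
    s * (2 * q (X t₀) * h) = q' * x₁ := by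
  have hc_eq : c = fun t => √(q (X t)) := funext hc
  have hc_pos : 0 < c t₀ := by rw [hc_eq]; exact Real.sqrt_pos.mpr hpos
  have hc_sq : c t₀ ^ 2 = q (X t₀) := by rw [hc_eq]; exact Real.sq_sqrt hpos.le
  have hcd : HasDerivAt c (q' * x₁ / (2 * c t₀)) t₀ := by
    rw [hc_eq]
    exact (hq.comp t₀ hX).sqrt hpos.ne'
  rw [hs, hcd.deriv, ← hc_sq]
  field_simp

theorem lambda_div_Sigma_eq_of_running {x₀ x₁ p₁ p₂ p₃ h s : ℝ} (hx₀ : x₀ ≠ 0)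
    (hp₁ : p₁ ≠ 0) (hD : p₁ + 2 * x₀ * p₂ ≠ 0) (hh : h ≠ 0)
    (hkey : x₁ * (p₁ + x₀ * p₂) = -3 * h * (x₀ * p₁))
    (hs : s * (2 * (p₁ / (p₁ + 2 * x₀ * p₂)) * h)
      = -2 * (p₁ * p₂ - x₀ * p₂ ^ 2 + x₀ * p₁ * p₃) / (p₁ + 2 * x₀ * p₂) ^ 2 * x₁) :
    (x₀ ^ 2 * p₂ + 2 / 3 * x₀ ^ 3 * p₃) / (x₀ * p₁ + 2 * x₀ ^ 2 * p₂)
      = 1 / 3 * (1 / (2 * (p₁ / (p₁ + 2 * x₀ * p₂))) * (1 + 2 / 3 * s)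
        * (1 + p₁ / (p₁ + 2 * x₀ * p₂)) - 1) := by
  have hE : p₁ + x₀ * p₂ ≠ 0 := by
    rintro hE
    rw [hE, mul_zero] at hkey
    exact mul_ne_zero (mul_ne_zero (by norm_num) hh) (mul_ne_zero hx₀ hp₁) hkey.symm
  have hs' : s = 3 * x₀ * (p₁ * p₂ - x₀ * p₂ ^ 2 + x₀ * p₁ * p₃)
      / ((p₁ + 2 * x₀ * p₂) * (p₁ + x₀ * p₂)) := by
    have hx₁ : x₁ = -3 * h * (x₀ * p₁) / (p₁ + x₀ * p₂) := eq_div_of_mul_eq hE hkey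
    rw [hx₁] at hs
    field_simp at hs ⊢
    linear_combination hs
  have hSig : x₀ * p₁ + 2 * x₀ ^ 2 * p₂ ≠ 0 := by
    convert mul_ne_zero hx₀ hD using 1; ring
  -- the form in which `field_simp` meets the denominator `p₁ + 2 * x₀ * p₂`
  have hD' : p₁ + x₀ * p₂ * 2 ≠ 0 := by contrapose! hD; linarith
  rw [hs']
  field_simp
  ring

theorem lambda_over_Sigma_matter_contraction_general
    (ttil t₀ a b : ℝ)
    (P : ℝ → ℝ) (hP : ContDiff ℝ 3 P)
    (H : ℝ → ℝ) (hH : ∀ t : ℝ, t ≠ ttil → H t = 2 / (3 * (t - ttil)))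
    (ht₀ : t₀ ∈ Set.Ioo a b) (httil : ttil ∉ Set.Ioo a b)
    (X : ℝ → ℝ) (hX : DifferentiableOn ℝ X (Set.Ioo a b))
    (hFried : ∀ t ∈ Set.Ioo a b, deriv H t = -(X t * deriv P (X t)))
    (hX0 : X t₀ ≠ 0)
    (hP1 : 0 < deriv P (X t₀))
    (hP2 : 0 < deriv P (X t₀) + 2 * X t₀ * deriv (deriv P) (X t₀))
    (cs : ℝ → ℝ)
    (hcs : ∀ t : ℝ, cs t = Real.sqrt (deriv P (X t)
      / (deriv P (X t) + 2 * X t * deriv (deriv P) (X t))))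
    (s : ℝ) (hs : s = deriv cs t₀ / (cs t₀ * H t₀))
    (Sig lam : ℝ → ℝ)
    (hSig : ∀ Y, Sig Y = Y * deriv P Y + 2 * Y ^ 2 * deriv (deriv P) Y)
    (hlam : ∀ Y, lam Y = Y ^ 2 * deriv (deriv P) Y
      + (2 / 3) * Y ^ 3 * deriv (deriv (deriv P)) Y) :
    lam (X t₀) / Sig (X t₀)
      = (1 / 3) * ((1 / (2 * (cs t₀) ^ 2)) * (1 + (2 / 3) * s) * (1 + (cs t₀) ^ 2) - 1) := by
  have hmem : Set.Ioo a b ∈ 𝓝 t₀ := Ioo_mem_nhds ht₀.1 ht₀.2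
  have hne : ∀ t ∈ Set.Ioo a b, t ≠ ttil := fun t ht h => httil (h ▸ ht)
  have hP' : ContDiff ℝ 2 (deriv P) := hP.deriv'
  have dP₁ : Differentiable ℝ (deriv P) := hP'.differentiable (by norm_num)
  have dP₂ : Differentiable ℝ (deriv (deriv P)) := hP'.deriv'.differentiable one_ne_zero
  have hXd : HasDerivAt X (deriv X t₀) t₀ := (hX.differentiableAt hmem).hasDerivAt
  have hH₀ : H t₀ ≠ 0 := by
    have := sub_ne_zero.mpr (hne t₀ ht₀)
    rw [hH t₀ (hne t₀ ht₀)]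
    positivity
  have hkin : (fun t => X t * deriv P (X t)) =ᶠ[𝓝 t₀] fun t => 3 / 2 * H t ^ 2 := by
    filter_upwards [hmem] with t ht
    linarith [hFried t ht, (matterHubble_hasDerivAt hH (hne t ht)).deriv]
  have hkey := kinetic_deriv_eq_of_matter_friedmann (dP₁ (X t₀)).hasDerivAt hXd
    (matterHubble_hasDerivAt hH (hne t₀ ht₀)) hkin
  have hq : 0 < soundSpeedSq P (X t₀) := div_pos hP1 hP2
  have hq' := hasDerivAt_soundSpeedSq (dP₁ (X t₀)) (dP₂ (X t₀)) hP2.ne'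
  have hrun := running_mul_eq_of_eq_sqrt_comp hcs hq' hXd hq hH₀ hs
  have hcs₀ : cs t₀ ^ 2 = soundSpeedSq P (X t₀) := by rw [hcs]; exact Real.sq_sqrt hq.le
  rw [hlam, hSig, hcs₀]
  exact lambda_div_Sigma_eq_of_running hX0 hP1.ne' hP2.ne' hH₀ hkey hrun

/-- Exact expression for the ratio λ/Σ of a k-essence scalar field in a matter-dominated
contracting universe: with `H(t) = 2/(3(t − ttil))`, the Friedmann equation
`H' = −X·P'(X)` (reduced Planck units), vanishing pressure `P(X(t₀)) = 0`, sound speed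
`c_s = √(P'/(P' + 2X·P''))` and running `s = c_s'(t₀)/(c_s(t₀)·H(t₀))`, one has
`λ/Σ = (1/3)·[(1/(2c_s²))·(1 + (2/3)s)·(1 + c_s²) − 1]` at `t₀`. -/
theorem lambda_over_Sigma_matter_contraction
    (ttil t₀ a b : ℝ)
    (P : ℝ → ℝ) (hP : ContDiff ℝ 3 P)
    (H : ℝ → ℝ) (hH : ∀ t : ℝ, t ≠ ttil → H t = 2 / (3 * (t - ttil)))
    (ht₀ : t₀ ∈ Set.Ioo a b) (httil : ttil ∉ Set.Ioo a b)
    (X : ℝ → ℝ) (hX : DifferentiableOn ℝ X (Set.Ioo a b))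
    (hFried : ∀ t ∈ Set.Ioo a b, deriv H t = -(X t * deriv P (X t)))
    (hp0 : P (X t₀) = 0) (hX0 : X t₀ ≠ 0) (hX' : deriv X t₀ ≠ 0)
    (hP1 : 0 < deriv P (X t₀))
    (hP2 : 0 < deriv P (X t₀) + 2 * X t₀ * deriv (deriv P) (X t₀))
    (cs : ℝ → ℝ)
    (hcs : ∀ t : ℝ, cs t = Real.sqrt (deriv P (X t)
      / (deriv P (X t) + 2 * X t * deriv (deriv P) (X t))))
    (s : ℝ) (hs : s = deriv cs t₀ / (cs t₀ * H t₀))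
    (Sig lam : ℝ → ℝ)
    (hSig : ∀ Y, Sig Y = Y * deriv P Y + 2 * Y ^ 2 * deriv (deriv P) Y)
    (hlam : ∀ Y, lam Y = Y ^ 2 * deriv (deriv P) Y
      + (2 / 3) * Y ^ 3 * deriv (deriv (deriv P)) Y) :
    lam (X t₀) / Sig (X t₀)
      = (1 / 3) * ((1 / (2 * (cs t₀) ^ 2)) * (1 + (2 / 3) * s) * (1 + (cs t₀) ^ 2) - 1) :=
  lambda_over_Sigma_matter_contraction_general ttil t₀ a b P hP H hH ht₀ httil X hX hFried hX0 hP1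
    hP2 cs hcs s hs Sig lam hSig hlam
end

section
/- Let k₁, k₂, k₃ > 0 and c_s ≠ 0, set ε = 3/2 and λ/Σ = (1 − c_s²)/(6c_s²), and define the five bispectrum contributions: 𝒜_redef = (3ε/16 − 3/(4c_s²))·Σᵢkᵢ³ + (3ε/64)·Σ_{i≠j}kᵢkⱼ² − (3ε/(64·k₁²k₂²k₃²))·(Σ_{i≠j}kᵢ⁷kⱼ² + Σ_{i≠j}kᵢ⁶kⱼ³ − 2Σ_{i≠j}kᵢ⁵kⱼ⁴); 𝒜_{ζζ̇²} = −(c_s²/8)·[(ε − 3 + 3c_s²)/c_s⁴ − ε²/2]·Σᵢkᵢ³; 𝒜_{ζ̇∂ζ∂χ} = −(ε/8)·Σᵢkᵢ³ + (ε/(8·k₁²k₂²k₃²))·(Σ_{i≠j}kᵢ⁷kⱼ² − Σ_{i≠j}kᵢ⁴kⱼ⁵); 𝒜_{ζ(∂ᵢ∂ⱼχ)²} = −(c_s²ε²/32)·Σᵢkᵢ³ + (c_s²ε²/64)·Σ_{i≠j}kᵢ²kⱼ + (c_s²ε²/(64·k₁²k₂²k₃²))·(Σᵢkᵢ⁹ −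 Σ_{i≠j}kᵢ⁶kⱼ³ + 3Σ_{i≠j}kᵢ⁵kⱼ⁴ − 3Σ_{i≠j}kᵢ⁷kⱼ²); 𝒜_{ζ̇³} = −(9/2)·(1 − 1/c_s² + 2·λ/Σ)·Σᵢkᵢ³. Then 𝒜_redef + 𝒜_{ζζ̇²} + 𝒜_{ζ̇∂ζ∂χ} + 𝒜_{ζ(∂ᵢ∂ⱼχ)²} + 𝒜_{ζ̇³} = 𝒜_tot(k₁,k₂,k₃;c_s), where 𝒜_tot(k₁,k₂,k₃;c_s) = (−105/32 + 39/(16c_s²) + 9c_s²/128)·Σᵢkᵢ³ + (3/256)(3c_s² + 6)·Σ_{i≠j}kᵢ²kⱼ + (3/(256·k₁²k₂²k₃²))·[3c_s²·Σᵢkᵢ⁹ + (10 − 9c_s²)·Σ_{i≠j}kᵢ⁷kⱼ² − (3c_s² + 6)·Σ_{i≠j}kᵢ⁶kⱼ³ + (9c_s² − 4)·Σ_{i≠j}kᵢ⁵kⱼ⁴]. -/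
/-- `Σᵢ kᵢᵃ = k₁ᵃ + k₂ᵃ + k₃ᵃ`. -/
noncomputable def sumPow (k₁ k₂ k₃ : ℝ) (a : ℕ) : ℝ := k₁ ^ a + k₂ ^ a + k₃ ^ a

/-- `Σ_{i≠j} kᵢᵃ·kⱼᵇ`, summed over the six ordered pairs of distinct indices in {1,2,3}. -/
noncomputable def sumPow2 (k₁ k₂ k₃ : ℝ) (a b : ℕ) : ℝ :=
  k₁ ^ a * k₂ ^ b + k₁ ^ a * k₃ ^ b + k₂ ^ a * k₁ ^ b
    + k₂ ^ a * k₃ ^ b + k₃ ^ a * k₁ ^ b + k₃ ^ a * k₂ ^ b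

/-- The total shape function `𝒜_tot(k₁,k₂,k₃;c_s)` of the bispectrum of curvature
perturbations in matter bounce cosmology with a k-essence scalar field of constant
sound speed `c_s`. -/
noncomputable def Atot (k₁ k₂ k₃ cs : ℝ) : ℝ :=
  (-105 / 32 + 39 / (16 * cs ^ 2) + 9 * cs ^ 2 / 128) * sumPow k₁ k₂ k₃ 3
    + (3 / 256) * (3 * cs ^ 2 + 6) * sumPow2 k₁ k₂ k₃ 2 1
    + (3 / (256 * (k₁ ^ 2 * k₂ ^ 2 * k₃ ^ 2)))
      * (3 * cs ^ 2 * sumPow k₁ k₂ k₃ 9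
        + (10 - 9 * cs ^ 2) * sumPow2 k₁ k₂ k₃ 7 2
        - (3 * cs ^ 2 + 6) * sumPow2 k₁ k₂ k₃ 6 3
        + (9 * cs ^ 2 - 4) * sumPow2 k₁ k₂ k₃ 5 4)

/-- The five contributions to the bispectrum shape function (from the field redefinition
and the interaction terms `ζζ̇²`, `ζ̇(∂ζ)(∂χ)`, `ζ(∂ᵢ∂ⱼχ)²`, `ζ̇³` of the cubic action),
with `ε = 3/2` and `λ/Σ = (1 − c_s²)/(6c_s²)`, sum up to the total shape function `𝒜_tot`. -/
theorem shape_function_total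
    (cs : ℝ) (hcs : cs ≠ 0) (eps loS : ℝ)
    (heps : eps = 3 / 2) (hloS : loS = (1 - cs ^ 2) / (6 * cs ^ 2)) :
    ∀ k₁ k₂ k₃ : ℝ, 0 < k₁ → 0 < k₂ → 0 < k₃ →
      -- 𝒜_redef
      ((3 * eps / 16 - 3 / (4 * cs ^ 2)) * sumPow k₁ k₂ k₃ 3
          + (3 * eps / 64) * sumPow2 k₁ k₂ k₃ 1 2
          - (3 * eps / (64 * (k₁ ^ 2 * k₂ ^ 2 * k₃ ^ 2)))
            * (sumPow2 k₁ k₂ k₃ 7 2 + sumPow2 k₁ k₂ k₃ 6 3 - 2 * sumPow2 k₁ k₂ k₃ 5 4))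
      -- 𝒜_{ζζ̇²}
      + (-(cs ^ 2 / 8) * ((eps - 3 + 3 * cs ^ 2) / cs ^ 4 - eps ^ 2 / 2)
          * sumPow k₁ k₂ k₃ 3)
      -- 𝒜_{ζ̇∂ζ∂χ}
      + (-(eps / 8) * sumPow k₁ k₂ k₃ 3
          + (eps / (8 * (k₁ ^ 2 * k₂ ^ 2 * k₃ ^ 2)))
            * (sumPow2 k₁ k₂ k₃ 7 2 - sumPow2 k₁ k₂ k₃ 4 5))
      -- 𝒜_{ζ(∂ᵢ∂ⱼχ)²}
      + (-(cs ^ 2 * eps ^ 2 / 32) * sumPow k₁ k₂ k₃ 3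
          + (cs ^ 2 * eps ^ 2 / 64) * sumPow2 k₁ k₂ k₃ 2 1
          + (cs ^ 2 * eps ^ 2 / (64 * (k₁ ^ 2 * k₂ ^ 2 * k₃ ^ 2)))
            * (sumPow k₁ k₂ k₃ 9 - sumPow2 k₁ k₂ k₃ 6 3
              + 3 * sumPow2 k₁ k₂ k₃ 5 4 - 3 * sumPow2 k₁ k₂ k₃ 7 2))
      -- 𝒜_{ζ̇³}
      + (-(9 / 2) * (1 - 1 / cs ^ 2 + 2 * loS) * sumPow k₁ k₂ k₃ 3)
      = Atot k₁ k₂ k₃ cs := by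
  intro k₁ k₂ k₃ h1 h2 h3
  subst heps hloS
  simp only [Atot, sumPow, sumPow2]
  field_simp
  ring
end

section
/- Let c_s ≠ 0 and k > 0. With 𝒜_tot(k₁,k₂,k₃;c_s) = (−105/32 + 39/(16c_s²) + 9c_s²/128)·Σᵢkᵢ³ + (3/256)(3c_s² + 6)·Σ_{i≠j}kᵢ²kⱼ + (3/(256·k₁²k₂²k₃²))·[3c_s²·Σᵢkᵢ⁹ + (10 − 9c_s²)·Σ_{i≠j}kᵢ⁷kⱼ² − (3c_s² + 6)·Σ_{i≠j}kᵢ⁶kⱼ³ + (9c_s² − 4)·Σ_{i≠j}kᵢ⁵kⱼ⁴] and f_NL(k₁,k₂,k₃) = (10/3)·𝒜_tot(k₁,k₂,k₃;c_s)/(k₁³ + k₂³ + k₃³), one has the exact folded value f_NL(2k,k,k) = −37/4 + 65/(8c_s²). -/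
/-- The non-Gaussianity amplitude parameter
`f_NL = (10/3)·𝒜_tot/(k₁³ + k₂³ + k₃³)` in the folded configuration `k₁ = 2k₂ = 2k₃ = 2k`
equals `−37/4 + 65/(8c_s²)`. -/
theorem fNL_folded
    (cs : ℝ) (hcs : cs ≠ 0) (k : ℝ) (hk : 0 < k)
    (fNL : ℝ → ℝ → ℝ → ℝ)
    (hfNL : ∀ k₁ k₂ k₃ : ℝ,
      fNL k₁ k₂ k₃ = (10 / 3) * Atot k₁ k₂ k₃ cs / (k₁ ^ 3 + k₂ ^ 3 + k₃ ^ 3)) :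
    fNL (2 * k) k k = -37 / 4 + 65 / (8 * cs ^ 2) := by
  rw [hfNL, Atot, sumPow, sumPow, sumPow2, sumPow2, sumPow2, sumPow2]
  have hk' : k ≠ 0 := ne_of_gt hk
  field_simp
  ring
end

section
/- Let c_s ≠ 0. With 𝒜_tot(k₁,k₂,k₃;c_s) = (−105/32 + 39/(16c_s²) + 9c_s²/128)·Σᵢkᵢ³ + (3/256)(3c_s² + 6)·Σ_{i≠j}kᵢ²kⱼ + (3/(256·k₁²k₂²k₃²))·[3c_s²·Σᵢkᵢ⁹ + (10 − 9c_s²)·Σ_{i≠j}kᵢ⁷kⱼ² − (3c_s² + 6)·Σ_{i≠j}kᵢ⁶kⱼ³ + (9c_s² − 4)·Σ_{i≠j}kᵢ⁵kⱼ⁴] and f_NL(k₁,k₂,k₃) = (10/3)·𝒜_tot(k₁,k₂,k₃;c_s)/(k₁³ + k₂³ + k₃³), the squeezed (local) limit exists and equals lim_{x→0⁺} f_NL(x, 1, 1) = −165/16 + 65/(8c_s²). -/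
open Filter Topology

/-- The squeezed (local) limit of the non-Gaussianity amplitude parameter
`f_NL = (10/3)·𝒜_tot/(k₁³ + k₂³ + k₃³)`: the limit of `f_NL(x,1,1)` as `x → 0⁺`
exists and equals `−165/16 + 65/(8c_s²)`. -/
theorem fNL_squeezed_limit
    (cs : ℝ) (hcs : cs ≠ 0)
    (fNL : ℝ → ℝ → ℝ → ℝ)
    (hfNL : ∀ k₁ k₂ k₃ : ℝ,
      fNL k₁ k₂ k₃ = (10 / 3) * Atot k₁ k₂ k₃ cs / (k₁ ^ 3 + k₂ ^ 3 + k₃ ^ 3)) :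
    Tendsto (fun x : ℝ => fNL x 1 1) (𝓝[>] 0)
      (𝓝 (-165 / 16 + 65 / (8 * cs ^ 2))) := by
  set g : ℝ → ℝ := fun x =>
    ((-165 / 8 + 65 / (4 * cs ^ 2)) + (5 / 32 + 15 * cs ^ 2 / 16) * x ^ 2
      + (-45 / 4 + 65 / (8 * cs ^ 2) + 15 * cs ^ 2 / 16) * x ^ 3
      + (-15 / 32 - 15 * cs ^ 2 / 64) * x ^ 4
      + (25 / 32 - 45 * cs ^ 2 / 64) * x ^ 5
      + (15 * cs ^ 2 / 128) * x ^ 7) / (x ^ 3 + 2) with hg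
  have hcs2 : cs ^ 2 ≠ 0 := pow_ne_zero _ hcs
  have heq : ∀ x : ℝ, 0 < x → fNL x 1 1 = g x := by
    intro x hx
    have hx0 : x ≠ 0 := ne_of_gt hx
    have hd : x ^ 3 + 2 ≠ 0 := by positivity
    rw [hfNL, hg]
    simp only [Atot, sumPow, sumPow2, one_pow, mul_one, one_mul]
    field_simp
    ring
  have hgt : Tendsto g (𝓝[>] (0:ℝ)) (𝓝 (g 0)) := by
    apply Tendsto.mono_left _ nhdsWithin_le_nhds
    apply (ContinuousAt.div (by fun_prop) (by fun_prop) (by norm_num)).tendsto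
  have hg0 : g 0 = -165 / 16 + 65 / (8 * cs ^ 2) := by
    rw [hg]; field_simp; ring
  rw [hg0] at hgt
  refine hgt.congr' ?_
  filter_upwards [self_mem_nhdsWithin] with x hx
  exact (heq x hx).symm
end

section
/- Let c_s ≠ 0 and define, for x ∈ (0,2], the dimensionless shape function ℱ(x) = 𝒜_tot(x,1,1;c_s)/x, where 𝒜_tot(k₁,k₂,k₃;c_s) = (−105/32 + 39/(16c_s²) + 9c_s²/128)·Σᵢkᵢ³ + (3/256)(3c_s² + 6)·Σ_{i≠j}kᵢ²kⱼ + (3/(256·k₁²k₂²k₃²))·[3c_s²·Σᵢkᵢ⁹ + (10 − 9c_s²)·Σ_{i≠j}kᵢ⁷kⱼ² − (3c_s² + 6)·Σ_{i≠j}kᵢ⁶kⱼ³ + (9c_s² − 4)·Σ_{i≠j}kᵢ⁵kⱼ⁴]. Then, with L = (3/8)·(−33/2 + 13/c_s²): (a) lim_{x→0⁺} x·ℱ(x) = L; (b) lim_{x→0⁺} (ℱ(x) − L/x) = 0 (the constant term of the expansion vanishes); and (c) lim_{x→0⁺} (ℱ(x) − L/x)/x = (3/64)·(1 + 6c_s²).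 That is, in the squeezed limit ℱ(x) = L/x + (3/64)(1 + 6c_s²)·x + O(x²). -/
open Filter Topology

lemma Atot_expand (cs x : ℝ) (hcs : cs ≠ 0) (hx : x ≠ 0) :
    Atot x 1 1 cs =
      (3 / 8) * (-33 / 2 + 13 / cs ^ 2)
      + (3 / 64) * (1 + 6 * cs ^ 2) * x ^ 2
      + (-27 / 8 + 9 * cs ^ 2 / 32 + 39 / (16 * cs ^ 2)) * x ^ 3
      + (-9 / 64 - 9 * cs ^ 2 / 128) * x ^ 4
      + (15 / 64 - 27 * cs ^ 2 / 128) * x ^ 5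
      + (9 * cs ^ 2 / 256) * x ^ 7 := by
  unfold Atot sumPow sumPow2
  field_simp
  ring


/-- Squeezed-limit expansion of the dimensionless shape function
`ℱ(x) = 𝒜_tot(x,1,1)/x`: with `L = (3/8)·(−33/2 + 13/c_s²)`, one has
(a) `x·ℱ(x) → L`, (b) `ℱ(x) − L/x → 0` (the constant term vanishes), and
(c) `(ℱ(x) − L/x)/x → (3/64)·(1 + 6c_s²)` as `x → 0⁺`; that is,
`ℱ(x) = L/x + (3/64)(1 + 6c_s²)·x + O(x²)`. -/
theorem shape_function_squeezed_expansion
    (cs : ℝ) (hcs : cs ≠ 0)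
    (F : ℝ → ℝ) (hF : ∀ x ∈ Set.Ioc (0 : ℝ) 2, F x = Atot x 1 1 cs / x)
    (L : ℝ) (hL : L = (3 / 8) * (-33 / 2 + 13 / cs ^ 2)) :
    Tendsto (fun x : ℝ => x * F x) (𝓝[>] 0) (𝓝 L)
    ∧ Tendsto (fun x : ℝ => F x - L / x) (𝓝[>] 0) (𝓝 0)
    ∧ Tendsto (fun x : ℝ => (F x - L / x) / x) (𝓝[>] 0)
        (𝓝 ((3 / 64) * (1 + 6 * cs ^ 2))) := by
  have hmem : Set.Ioc (0:ℝ) 2 ∈ 𝓝[>] (0:ℝ) :=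
    Ioc_mem_nhdsGT_of_mem ⟨le_refl 0, by norm_num⟩
  set M : ℝ := (3 / 64) * (1 + 6 * cs ^ 2) with hM
  set c5 : ℝ := -27 / 8 + 9 * cs ^ 2 / 32 + 39 / (16 * cs ^ 2) with hc5
  set c6 : ℝ := -9 / 64 - 9 * cs ^ 2 / 128 with hc6
  set c7 : ℝ := 15 / 64 - 27 * cs ^ 2 / 128 with hc7
  set c9 : ℝ := 9 * cs ^ 2 / 256 with hc9
  have key : ∀ x ∈ Set.Ioc (0:ℝ) 2,
      Atot x 1 1 cs = L + M * x ^ 2 + c5 * x ^ 3 + c6 * x ^ 4 + c7 * x ^ 5 + c9 * x ^ 7 := by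
    intro x hx
    rw [hL]
    exact Atot_expand cs x hcs (ne_of_gt hx.1)
  refine ⟨?_, ?_, ?_⟩
  · -- x * F x = Atot x 1 1 cs on Ioc 0 2
    have heq : ∀ᶠ x in 𝓝[>] (0:ℝ),
        x * F x = L + M * x ^ 2 + c5 * x ^ 3 + c6 * x ^ 4 + c7 * x ^ 5 + c9 * x ^ 7 := by
      filter_upwards [hmem] with x hx
      rw [hF x hx, key x hx]
      rw [mul_comm, div_mul_cancel₀ _ (ne_of_gt hx.1)]
    have : Tendsto (fun x : ℝ => L + M * x ^ 2 + c5 * x ^ 3 + c6 * x ^ 4 + c7 * x ^ 5 + c9 * x ^ 7)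
        (𝓝[>] 0) (𝓝 L) := by
      have := ((Continuous.tendsto (by fun_prop) 0).mono_left
        (nhdsWithin_le_nhds : 𝓝[>] (0:ℝ) ≤ 𝓝 0) :
        Tendsto (fun x : ℝ => L + M * x ^ 2 + c5 * x ^ 3 + c6 * x ^ 4 + c7 * x ^ 5 + c9 * x ^ 7)
          (𝓝[>] 0) (𝓝 (L + M * 0 ^ 2 + c5 * 0 ^ 3 + c6 * 0 ^ 4 + c7 * 0 ^ 5 + c9 * 0 ^ 7)))
      simpa using this
    exact this.congr' (heq.mono fun x h => h.symm)
  · have heq : ∀ᶠ x in 𝓝[>] (0:ℝ),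
        F x - L / x = M * x + c5 * x ^ 2 + c6 * x ^ 3 + c7 * x ^ 4 + c9 * x ^ 6 := by
      filter_upwards [hmem] with x hx
      rw [hF x hx, key x hx]
      have hx0 : x ≠ 0 := ne_of_gt hx.1
      field_simp
      ring
    have : Tendsto (fun x : ℝ => M * x + c5 * x ^ 2 + c6 * x ^ 3 + c7 * x ^ 4 + c9 * x ^ 6)
        (𝓝[>] 0) (𝓝 0) := by
      have := ((Continuous.tendsto (by fun_prop) 0).mono_left
        (nhdsWithin_le_nhds : 𝓝[>] (0:ℝ) ≤ 𝓝 0) :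
        Tendsto (fun x : ℝ => M * x + c5 * x ^ 2 + c6 * x ^ 3 + c7 * x ^ 4 + c9 * x ^ 6)
          (𝓝[>] 0) (𝓝 (M * 0 + c5 * 0 ^ 2 + c6 * 0 ^ 3 + c7 * 0 ^ 4 + c9 * 0 ^ 6)))
      simpa using this
    exact this.congr' (heq.mono fun x h => h.symm)
  · have heq : ∀ᶠ x in 𝓝[>] (0:ℝ),
        (F x - L / x) / x = M + c5 * x + c6 * x ^ 2 + c7 * x ^ 3 + c9 * x ^ 5 := by
      filter_upwards [hmem] with x hx
      rw [hF x hx, key x hx]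
      have hx0 : x ≠ 0 := ne_of_gt hx.1
      field_simp
      ring
    have : Tendsto (fun x : ℝ => M + c5 * x + c6 * x ^ 2 + c7 * x ^ 3 + c9 * x ^ 5)
        (𝓝[>] 0) (𝓝 M) := by
      have := ((Continuous.tendsto (by fun_prop) 0).mono_left
        (nhdsWithin_le_nhds : 𝓝[>] (0:ℝ) ≤ 𝓝 0) :
        Tendsto (fun x : ℝ => M + c5 * x + c6 * x ^ 2 + c7 * x ^ 3 + c9 * x ^ 5)
          (𝓝[>] 0) (𝓝 (M + c5 * 0 + c6 * 0 ^ 2 + c7 * 0 ^ 3 + c9 * 0 ^ 5)))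
      simpa using this
    exact this.congr' (heq.mono fun x h => h.symm)
end

section
/- Define g : (0,1] → ℝ by g(c) = −175/16 + 65/(8c²) + 15c²/64, and let c*² = (70 − 2√1147)/3. Then 0 < c*² < 1; for every c ∈ (0,1], g(c) > 0 if and only if c² < c*², g(c) = 0 if and only if c² = c*², and g(c) < 0 if and only if c² > c*². In particular, g has a unique zero c* = √((70 − 2√1147)/3) ≈ 0.87 in (0,1], with g positive below it and negative above it. -/
/-- Sign of the dominant non-Gaussianity amplitude `g(c) = −175/16 + 65/(8c²) + 15c²/64`
on `(0,1]`: with `c*² = (70 − 2√1147)/3` one has `0 < c*² < 1`, and for `c ∈ (0,1]`,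
`g(c)` is positive, zero, or negative according as `c²` is below, equal to, or above `c*²`;
in particular `c* = √((70 − 2√1147)/3) ≈ 0.87` is the unique zero of `g` in `(0,1]`. -/
theorem fNL_sign_change
    (g : ℝ → ℝ) (hg : ∀ c : ℝ, g c = -175 / 16 + 65 / (8 * c ^ 2) + 15 * c ^ 2 / 64)
    (cstar2 : ℝ) (hcstar2 : cstar2 = (70 - 2 * Real.sqrt 1147) / 3) :
    (0 < cstar2 ∧ cstar2 < 1)
    ∧ (∀ c ∈ Set.Ioc (0 : ℝ) 1,
        (0 < g c ↔ c ^ 2 < cstar2) ∧ (g c = 0 ↔ c ^ 2 = cstar2)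
          ∧ (g c < 0 ↔ cstar2 < c ^ 2))
    ∧ g (Real.sqrt cstar2) = 0
    ∧ (∃! c : ℝ, c ∈ Set.Ioc (0 : ℝ) 1 ∧ g c = 0) := by
  set s := Real.sqrt 1147 with hsdef
  have hs0 : (0:ℝ) ≤ s := Real.sqrt_nonneg _
  have hs2 : s ^ 2 = 1147 := Real.sq_sqrt (by norm_num)
  have hslt : s < 34 := by nlinarith
  have hsgt : (33.5:ℝ) < s := by nlinarith
  have h01 : 0 < cstar2 ∧ cstar2 < 1 := by
    constructor <;> · rw [hcstar2]; nlinarith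
  -- key sign lemmas in terms of x = c^2
  have key : ∀ c ∈ Set.Ioc (0 : ℝ) 1,
      (0 < g c ↔ c ^ 2 < cstar2) ∧ (g c = 0 ↔ c ^ 2 = cstar2)
        ∧ (g c < 0 ↔ cstar2 < c ^ 2) := by
    intro c hc
    obtain ⟨hc0, hc1⟩ := hc
    have hx0 : 0 < c ^ 2 := by positivity
    have hx1 : c ^ 2 ≤ 1 := by nlinarith
    have hgc : g c * (64 * c ^ 2) = 15 * (c^2)^2 - 700 * c^2 + 520 := by
      rw [hg]; field_simp; ring
    have hpos : 0 < g c ↔ c ^ 2 < cstar2 := by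
      constructor
      · intro h
        have hP : 0 < 15 * (c^2)^2 - 700 * c^2 + 520 := by
          rw [← hgc]; positivity
        rw [hcstar2]
        nlinarith [sq_nonneg (70 - 3 * c^2 - 2*s), sq_nonneg (70 - 3 * c^2 + 2*s)]
      · intro h
        rw [hcstar2] at h
        have h1 : 2 * s < 70 - 3 * c ^ 2 := by linarith
        have hP : 0 < 15 * (c^2)^2 - 700 * c^2 + 520 := by
          nlinarith [mul_pos (by linarith : (0:ℝ) < 70 - 3*c^2 - 2*s)
            (by linarith : (0:ℝ) < 70 - 3*c^2 + 2*s)]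
        nlinarith [hgc]
    have hneg : g c < 0 ↔ cstar2 < c ^ 2 := by
      constructor
      · intro h
        have hP : 15 * (c^2)^2 - 700 * c^2 + 520 < 0 := by
          rw [← hgc]; nlinarith
        rw [hcstar2]
        nlinarith [sq_nonneg (70 - 3 * c^2 - 2*s), sq_nonneg (70 - 3 * c^2 + 2*s)]
      · intro h
        rw [hcstar2] at h
        have h1 : 70 - 3 * c ^ 2 < 2 * s := by linarith
        have hP : 15 * (c^2)^2 - 700 * c^2 + 520 < 0 := by
          nlinarith [sq_nonneg (70 - 3*c^2 - 2*s)]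
        nlinarith [hgc]
    have heq : g c = 0 ↔ c ^ 2 = cstar2 := by
      constructor
      · intro h
        by_contra hne
        rcases lt_or_gt_of_ne hne with h' | h'
        · exact absurd (hpos.mpr h') (by rw [h]; norm_num)
        · exact absurd (hneg.mpr h') (by rw [h]; norm_num)
      · intro h
        rcases lt_trichotomy (g c) 0 with h' | h' | h'
        · exact absurd (hneg.mp h') (by rw [h]; exact lt_irrefl _)
        · exact h'
        · exact absurd (hpos.mp h') (by rw [h]; exact lt_irrefl _)
    exact ⟨hpos, heq, hneg⟩
  have hmem : Real.sqrt cstar2 ∈ Set.Ioc (0:ℝ) 1 := by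
    constructor
    · exact Real.sqrt_pos.mpr h01.1
    · rw [show (1:ℝ) = Real.sqrt 1 by simp]
      exact Real.sqrt_le_sqrt h01.2.le
  have hsq : (Real.sqrt cstar2) ^ 2 = cstar2 := Real.sq_sqrt h01.1.le
  have hzero : g (Real.sqrt cstar2) = 0 := ((key _ hmem).2.1).mpr hsq
  refine ⟨h01, key, hzero, ⟨Real.sqrt cstar2, ⟨hmem, hzero⟩, ?_⟩⟩
  rintro c ⟨hc, hgc0⟩
  have h2 : c ^ 2 = cstar2 := ((key c hc).2.1).mp hgc0
  have := Real.sqrt_sq hc.1.le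
  rw [← this, h2]
end

section
/- For every real c_s > 0, if −165/16 + 65/(8c_s²) ≤ 10.8, then 24·c_s > 14.88. -/
/-- The other direction of the no-go theorem: if the local non-Gaussianity amplitude
`f_NL^local = −165/16 + 65/(8c_s²)` satisfies the observational bound `≤ 10.8`, then the
tensor-to-scalar ratio `r = 24c_s` exceeds `14.88`. -/
theorem no_go_large_tensor_to_scalar
    (cs : ℝ) (h : 0 < cs) (hfNL : -165 / 16 + 65 / (8 * cs ^ 2) ≤ 10.8) :
    24 * cs > 14.88 := by
  have h2 : (0:ℝ) < 8 * cs ^ 2 := by positivity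
  have key : 65 ≤ 21.1125 * (8 * cs ^ 2) := by
    have := (div_le_iff₀ h2).mp (by linarith : 65 / (8 * cs ^ 2) ≤ 21.1125)
    linarith
  nlinarith [sq_nonneg (cs - 0.62), mul_pos h h]
end
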